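/- arXiv:2508.11878 — 5 statements merged into one kernel-verified Lean document; each statement's English description precedes it below -/
import Mathlib

section
/- Let E be a real normed vector space, T₀ : E → E a linear map, and T : E → E an arbitrary map. Suppose f₀, f ∈ E satisfy T₀ f₀ = f₀ and T f = f, and suppose that for each integer i ≥ 0 there is a constant Cᵢ ≥ 0 such that ‖T₀^i g‖ ≤ Cᵢ ‖g‖ for all g ∈ E. Then for every integer N ≥ 1, ‖f − f₀‖ ≤ ‖T₀^N (f − f₀)‖ + ‖T f − T₀ f‖ · Σ_{i=0}^{N−1} Cᵢ. -/
/-- Abstract fixed-point comparison sublemma: if `T₀` is linear with iterate bounds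
`‖T₀^i g‖ ≤ Cᵢ ‖g‖`, `f₀` is a fixed point of `T₀` and `f` a fixed point of an
arbitrary map `T`, then for every `N ≥ 1`,
`‖f − f₀‖ ≤ ‖T₀^N (f − f₀)‖ + ‖T f − T₀ f‖ * Σ_{i=0}^{N−1} Cᵢ`. -/
theorem fixed_point_comparison
    {E : Type*} [NormedAddCommGroup E] [NormedSpace ℝ E]
    (T₀ : E →ₗ[ℝ] E) (T : E → E) (f₀ f : E)
    (hf₀ : T₀ f₀ = f₀) (hf : T f = f)
    (C : ℕ → ℝ) (hC : ∀ i, 0 ≤ C i)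
    (hbound : ∀ i : ℕ, ∀ g : E, ‖(⇑T₀)^[i] g‖ ≤ C i * ‖g‖)
    (N : ℕ) (hN : 1 ≤ N) :
    ‖f - f₀‖ ≤ ‖(⇑T₀)^[N] (f - f₀)‖ + ‖T f - T₀ f‖ * ∑ i ∈ Finset.range N, C i := by
  have key : ∀ n : ℕ, f - f₀ =
      (⇑T₀)^[n] (f - f₀) + ∑ i ∈ Finset.range n, (⇑T₀)^[i] (f - T₀ f) := by
    intro n
    induction n with
    | zero => simp
    | succ n ih =>
      rw [Finset.sum_range_succ]
      have : (⇑T₀)^[n] (f - f₀) =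
          (⇑T₀)^[n + 1] (f - f₀) + (⇑T₀)^[n] (f - T₀ f) := by
        rw [Function.iterate_succ_apply]
        simp only [← Module.End.pow_apply, ← map_add, map_sub, ← map_sub]
        congr 1
        rw [map_sub, hf₀]
        abel
      conv_lhs => rw [ih, this]
      abel
  have he : f - T₀ f = T f - T₀ f := by rw [hf]
  calc ‖f - f₀‖ = ‖(⇑T₀)^[N] (f - f₀) + ∑ i ∈ Finset.range N, (⇑T₀)^[i] (f - T₀ f)‖ := by
        rw [← key N]
    _ ≤ ‖(⇑T₀)^[N] (f - f₀)‖ + ‖∑ i ∈ Finset.range N, (⇑T₀)^[i] (f - T₀ f)‖ :=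
        norm_add_le _ _
    _ ≤ ‖(⇑T₀)^[N] (f - f₀)‖ + ∑ i ∈ Finset.range N, ‖(⇑T₀)^[i] (f - T₀ f)‖ := by
        gcongr; exact norm_sum_le _ _
    _ ≤ ‖(⇑T₀)^[N] (f - f₀)‖ + ∑ i ∈ Finset.range N, C i * ‖f - T₀ f‖ := by
        gcongr with i _; exact hbound i _
    _ = ‖(⇑T₀)^[N] (f - f₀)‖ + ‖T f - T₀ f‖ * ∑ i ∈ Finset.range N, C i := by
        rw [he, ← Finset.sum_mul, mul_comm]
end

section
/- Let E be a real normed vector space with norm ‖·‖_w, and let ‖·‖_s : E → ℝ be a second norm on E (nonnegative, subadditive, and invariant under negation). Let δ₀ ∈ (0,1), let R : (0,1) → [0,∞), and for each δ ∈ [0,δ₀) let T_δ : E → E be a map with T₀ linear, and let μ_δ ∈ E satisfy T_δ μ_δ = μ_δ. Let ℓ : E → ℝ be a linear functional with ℓ(μ_δ) = 1 for all δ ∈ [0,δ₀). Assume: (P1) there is C > 0 such that ‖T₀ μ_δ − T_δ μ_δ‖_w ≤ C·R(δ) for all δ ∈ (0,δ₀); (P2) there is M > 0 such that ‖μ_δ‖_s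 ≤ M for all δ ∈ [0,δ₀); (P3) there are 0 < ρ₂ < 1 and C₂ > 0 such that ‖T₀ⁿ μ‖_w ≤ ρ₂ⁿ C₂ ‖μ‖_s for every n ≥ 1 and every μ ∈ E with ℓ(μ) = 0; (P4) there is M₂ > 0 such that ‖T₀ⁿ g‖_w ≤ M₂ ‖g‖_w for all g ∈ E and n ≥ 1. Assume moreover that δ ≤ R(δ) for all δ ∈ (0,δ₀). Then there exist D₁ > 0 and δ₁ ∈ (0,δ₀) such that for all δ ∈ (0,δ₁), ‖μ_δ − μ₀‖_w ≤ D₁ · R(δ) · |log δ|. -/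
/-
Split `μ_δ - μ₀ = T₀ⁿ (μ_δ - μ₀) + (μ_δ - T₀ⁿ μ_δ)`, using that `μ₀` is fixed by the linear
map `T₀`. The first term has zero mass, so by (P3) and (P2) it is at most `2 M C₂ ρ₂ⁿ`. The second
telescopes into `∑_{k<n} T₀ᵏ (μ_δ - T₀ μ_δ)`, and `μ_δ - T₀ μ_δ = T_δ μ_δ - T₀ μ_δ` is `O(R(δ))`
by (P1), so (P4) bounds it by `n · max M₂ 1 · C R(δ)`. Taking `n = ⌈log_{ρ₂} δ⌉` makes
`ρ₂ⁿ ≤ δ ≤ R(δ)` while `n = O(|log δ|)`.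
-/

open Finset Real

theorem AddMonoidHom.sub_iterate_apply_eq_sum {G : Type*} [AddCommGroup G] (f : G →+ G)
    (n : ℕ) (x : G) : x - f^[n] x = ∑ k ∈ Finset.range n, f^[k] (x - f x) := by
  refine (sum_range_sub' (f^[·] x) n).symm.trans (sum_congr rfl fun k _ => ?_)
  rw [iterate_map_sub, ← Function.iterate_succ_apply]

theorem norm_iterate_le_max_one_mul {E : Type*} [SeminormedAddCommGroup E] {f : E → E} {K : ℝ}
    (hf : ∀ n, 1 ≤ n → ∀ g, ‖f^[n] g‖ ≤ K * ‖g‖) (n : ℕ) (g : E) :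
    ‖f^[n] g‖ ≤ max K 1 * ‖g‖ := by
  rcases n.eq_zero_or_pos with rfl | hn
  · simpa using le_mul_of_one_le_left (norm_nonneg g) (le_max_right K 1)
  · exact (hf n hn g).trans (by gcongr; exact le_max_left K 1)

theorem one_le_abs_log_of_le_exp_neg_one {δ : ℝ} (hδ₀ : 0 < δ) (hδ : δ ≤ exp (-1)) :
    1 ≤ |log δ| := by
  have := (log_le_iff_le_exp hδ₀).2 hδ
  rw [abs_of_neg (by linarith)]
  linarith

theorem exists_pow_le_and_natCast_le_mul_abs_log {ρ δ : ℝ} (hρ₀ : 0 < ρ) (hρ₁ : ρ < 1)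
    (hδ₀ : 0 < δ) (hδ : δ ≤ exp (-1)) :
    ∃ n : ℕ, 1 ≤ n ∧ ρ ^ n ≤ δ ∧ (n : ℝ) ≤ (|log ρ|⁻¹ + 1) * |log δ| := by
  have hlogδ := one_le_abs_log_of_le_exp_neg_one hδ₀ hδ
  have hδ₁ : δ < 1 := hδ.trans_lt (exp_lt_one_iff.2 (by norm_num))
  have hlogb : 0 < logb ρ δ := logb_pos_of_base_lt_one hρ₀ hρ₁ hδ₀ hδ₁
  refine ⟨⌈logb ρ δ⌉₊, Nat.one_le_ceil_iff.2 hlogb, ?_, ?_⟩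
  · rw [← rpow_natCast, ← logb_le_iff_le_rpow_of_base_lt_one hρ₀ hρ₁ hδ₀]
    exact Nat.le_ceil _
  · have : logb ρ δ = |log δ| * |log ρ|⁻¹ := by
      rw [← abs_of_pos hlogb, logb, abs_div, div_eq_mul_inv]
    calc (⌈logb ρ δ⌉₊ : ℝ) ≤ logb ρ δ + 1 := (Nat.ceil_lt_add_one hlogb.le).le
      _ ≤ (|log ρ|⁻¹ + 1) * |log δ| := by rw [this]; nlinarith [inv_nonneg.2 (abs_nonneg (log ρ))]

theorem norm_sub_le_of_apply_eq_self {E : Type*} [SeminormedAddCommGroup E] (f : E →+ E)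
    {x y : E} (hy : f y = y) {K : ℝ} (hK : ∀ k g, ‖f^[k] g‖ ≤ K * ‖g‖) (n : ℕ) :
    ‖x - y‖ ≤ ‖f^[n] (x - y)‖ + n * (K * ‖x - f x‖) := by
  have hsplit : x - y = f^[n] (x - y) + (x - f^[n] x) := by
    rw [iterate_map_sub, Function.iterate_fixed hy]; abel
  have htail : ‖x - f^[n] x‖ ≤ n * (K * ‖x - f x‖) := by
    rw [f.sub_iterate_apply_eq_sum]
    refine (norm_sum_le _ _).trans ?_
    simpa only [sum_const, card_range, nsmul_eq_mul] using
      sum_le_sum fun k (_ : k ∈ Finset.range n) => hK k (x - f x)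
  calc ‖x - y‖ = ‖f^[n] (x - y) + (x - f^[n] x)‖ := congrArg _ hsplit
    _ ≤ _ := (norm_add_le _ _).trans (by gcongr)

theorem norm_sub_le_mul_abs_log_of_apply_eq_self {E : Type*} [SeminormedAddCommGroup E]
    (f : E →+ E) {x y : E} (hy : f y = y) {ρ A K c r δ : ℝ} (hρ₀ : 0 < ρ) (hρ₁ : ρ < 1)
    (hA : 0 ≤ A) (hdecay : ∀ n, 1 ≤ n → ‖f^[n] (x - y)‖ ≤ ρ ^ n * A)
    (hK₀ : 0 ≤ K) (hK : ∀ k g, ‖f^[k] g‖ ≤ K * ‖g‖) (hstep : ‖x - f x‖ ≤ c * r)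
    (hδ₀ : 0 < δ) (hδ : δ ≤ exp (-1)) (hδr : δ ≤ r) :
    ‖x - y‖ ≤ (A + (|log ρ|⁻¹ + 1) * K * c) * r * |log δ| := by
  obtain ⟨n, hn, hρn, hnlog⟩ := exists_pow_le_and_natCast_le_mul_abs_log hρ₀ hρ₁ hδ₀ hδ
  have hlogδ := one_le_abs_log_of_le_exp_neg_one hδ₀ hδ
  have hcr : 0 ≤ c * r := (norm_nonneg _).trans hstep
  calc ‖x - y‖ ≤ ‖f^[n] (x - y)‖ + n * (K * ‖x - f x‖) := norm_sub_le_of_apply_eq_self f hy hK n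
    _ ≤ δ * A + (|log ρ|⁻¹ + 1) * |log δ| * (K * (c * r)) := by
      gcongr
      exact (hdecay n hn).trans (by gcongr)
    _ ≤ (A + (|log ρ|⁻¹ + 1) * K * c) * r * |log δ| := by
      have : δ ≤ r * |log δ| := hδr.trans (le_mul_of_one_le_right (hδ₀.le.trans hδr) hlogδ)
      nlinarith

theorem quantitative_stability_fixed_points_general
    {E : Type*} [NormedAddCommGroup E] [NormedSpace ℝ E]
    (s : E → ℝ)
    (hs_add : ∀ x y, s (x + y) ≤ s x + s y)
    (hs_neg : ∀ x, s (-x) = s x)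
    (δ₀ : ℝ) (hδ₀ : 0 < δ₀ ∧ δ₀ < 1)
    (R : ℝ → ℝ)
    (T : ℝ → E → E) (hT₀lin : IsLinearMap ℝ (T 0))
    (μ : ℝ → E)
    (hfix : ∀ δ, 0 ≤ δ → δ < δ₀ → T δ (μ δ) = μ δ)
    (ℓ : E →ₗ[ℝ] ℝ)
    (hmass : ∀ δ, 0 ≤ δ → δ < δ₀ → ℓ (μ δ) = 1)
    (C : ℝ) (hC : 0 < C)
    (hP1 : ∀ δ, 0 < δ → δ < δ₀ → ‖T 0 (μ δ) - T δ (μ δ)‖ ≤ C * R δ)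
    (M : ℝ) (hM : 0 < M)
    (hP2 : ∀ δ, 0 ≤ δ → δ < δ₀ → s (μ δ) ≤ M)
    (ρ₂ C₂ : ℝ) (hρ₂0 : 0 < ρ₂) (hρ₂1 : ρ₂ < 1) (hC₂ : 0 < C₂)
    (hP3 : ∀ n : ℕ, 1 ≤ n → ∀ ν : E, ℓ ν = 0 → ‖(T 0)^[n] ν‖ ≤ ρ₂ ^ n * C₂ * s ν)
    (M₂ : ℝ)
    (hP4 : ∀ n : ℕ, 1 ≤ n → ∀ g : E, ‖(T 0)^[n] g‖ ≤ M₂ * ‖g‖)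
    (hδR : ∀ δ, 0 < δ → δ < δ₀ → δ ≤ R δ) :
    ∃ D₁ : ℝ, 0 < D₁ ∧ ∃ δ₁ : ℝ, 0 < δ₁ ∧ δ₁ < δ₀ ∧
      ∀ δ, 0 < δ → δ < δ₁ → ‖μ δ - μ 0‖ ≤ D₁ * R δ * |Real.log δ| := by
  have hδ₀' : 0 < min δ₀ (exp (-1)) := lt_min hδ₀.1 (exp_pos _)
  refine ⟨2 * M * C₂ + (|log ρ₂|⁻¹ + 1) * max M₂ 1 * C, by positivity,
    min δ₀ (exp (-1)) / 2, half_pos hδ₀', by linarith [min_le_left δ₀ (exp (-1))],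
    fun δ hδ hδδ₁ => ?_⟩
  have hδδ₀ : δ < δ₀ := by linarith [min_le_left δ₀ (exp (-1))]
  have hs : s (μ δ - μ 0) ≤ 2 * M := by
    have := hs_add (μ δ) (-μ 0)
    rw [hs_neg, ← sub_eq_add_neg] at this
    linarith [hP2 δ hδ.le hδδ₀, hP2 0 le_rfl hδ₀.1]
  have hdecay (n : ℕ) (hn : 1 ≤ n) : ‖(T 0)^[n] (μ δ - μ 0)‖ ≤ ρ₂ ^ n * (2 * M * C₂) := by
    have hℓ : ℓ (μ δ - μ 0) = 0 := by
      rw [map_sub, hmass δ hδ.le hδδ₀, hmass 0 le_rfl hδ₀.1, sub_self]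
    calc ‖(T 0)^[n] (μ δ - μ 0)‖ ≤ ρ₂ ^ n * C₂ * s (μ δ - μ 0) := hP3 n hn _ hℓ
      _ ≤ ρ₂ ^ n * C₂ * (2 * M) := by gcongr
      _ = ρ₂ ^ n * (2 * M * C₂) := by ring
  have hstep : ‖μ δ - T 0 (μ δ)‖ ≤ C * R δ := by
    simpa only [norm_sub_rev, hfix δ hδ.le hδδ₀] using hP1 δ hδ hδδ₀
  exact norm_sub_le_mul_abs_log_of_apply_eq_self (hT₀lin.mk' (T 0)).toAddMonoidHom
    (hfix 0 le_rfl hδ₀.1) hρ₂0 hρ₂1 (by positivity) hdecay (by positivity)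
    (norm_iterate_le_max_one_mul hP4) hstep hδ
    (by linarith [min_le_right δ₀ (exp (-1))]) (hδR δ hδ hδδ₀)

/-- Quantitative stability for fixed points of an `R(δ)`-family of operators:
under (P1)–(P4), with strong norm `s` (nonnegative, subadditive, symmetric),
fixed points `μ_δ` of unit mass `ℓ(μ_δ) = 1`, and `δ ≤ R(δ)`, there are `D₁ > 0`
and `δ₁ ∈ (0, δ₀)` such that `‖μ_δ − μ₀‖_w ≤ D₁ R(δ) |log δ|` for all `δ ∈ (0, δ₁)`. -/
theorem quantitative_stability_fixed_points
    {E : Type*} [NormedAddCommGroup E] [NormedSpace ℝ E]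
    (s : E → ℝ)
    (hs_nonneg : ∀ x, 0 ≤ s x)
    (hs_add : ∀ x y, s (x + y) ≤ s x + s y)
    (hs_neg : ∀ x, s (-x) = s x)
    (δ₀ : ℝ) (hδ₀ : 0 < δ₀ ∧ δ₀ < 1)
    (R : ℝ → ℝ) (hR_nonneg : ∀ δ, 0 < δ → δ < 1 → 0 ≤ R δ)
    (T : ℝ → E → E) (hT₀lin : IsLinearMap ℝ (T 0))
    (μ : ℝ → E)
    (hfix : ∀ δ, 0 ≤ δ → δ < δ₀ → T δ (μ δ) = μ δ)
    (ℓ : E →ₗ[ℝ] ℝ)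
    (hmass : ∀ δ, 0 ≤ δ → δ < δ₀ → ℓ (μ δ) = 1)
    (C : ℝ) (hC : 0 < C)
    (hP1 : ∀ δ, 0 < δ → δ < δ₀ → ‖T 0 (μ δ) - T δ (μ δ)‖ ≤ C * R δ)
    (M : ℝ) (hM : 0 < M)
    (hP2 : ∀ δ, 0 ≤ δ → δ < δ₀ → s (μ δ) ≤ M)
    (ρ₂ C₂ : ℝ) (hρ₂0 : 0 < ρ₂) (hρ₂1 : ρ₂ < 1) (hC₂ : 0 < C₂)
    (hP3 : ∀ n : ℕ, 1 ≤ n → ∀ ν : E, ℓ ν = 0 → ‖(T 0)^[n] ν‖ ≤ ρ₂ ^ n * C₂ * s ν)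
    (M₂ : ℝ) (hM₂ : 0 < M₂)
    (hP4 : ∀ n : ℕ, 1 ≤ n → ∀ g : E, ‖(T 0)^[n] g‖ ≤ M₂ * ‖g‖)
    (hδR : ∀ δ, 0 < δ → δ < δ₀ → δ ≤ R δ) :
    ∃ D₁ : ℝ, 0 < D₁ ∧ ∃ δ₁ : ℝ, 0 < δ₁ ∧ δ₁ < δ₀ ∧
      ∀ δ, 0 < δ → δ < δ₁ → ‖μ δ - μ 0‖ ≤ D₁ * R δ * |Real.log δ| :=
  quantitative_stability_fixed_points_general s hs_add hs_neg δ₀ hδ₀ R T hT₀lin μ hfix ℓ hmass C hC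
    hP1 M hM hP2 ρ₂ C₂ hρ₂0 hρ₂1 hC₂ hP3 M₂ hP4 hδR
end

section
/- Under the hypotheses (P1)–(P4) of the quantitative fixed-point stability lemma (E a real normed vector space with weak norm ‖·‖_w and strong norm ‖·‖_s; maps T_δ : E → E with T₀ linear; fixed points μ_δ with ℓ(μ_δ) = 1 for a linear functional ℓ; constants C, M, C₂, M₂ > 0 and 0 < ρ₂ < 1 as in (P1)–(P4)), if moreover R(δ) = K₆ · δ for some constant K₆ > 0, then there exist D₂ > 0 and δ₁ ∈ (0,δ₀) such that for all δ ∈ (0,δ₁), ‖μ_δ − μ₀‖_w ≤ D₂ · δ · |log δ|. -/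
set_option maxHeartbeats 1000000 in
/-- Quantitative stability for deterministic perturbations with linear modulus
`R(δ) = K₆ δ`: under (P1)–(P4), there are `D₂ > 0` and `δ₁ ∈ (0, δ₀)` such that
`‖μ_δ − μ₀‖_w ≤ D₂ δ |log δ|` for all `δ ∈ (0, δ₁)`. -/
theorem quantitative_stability_linear_modulus
    {E : Type*} [NormedAddCommGroup E] [NormedSpace ℝ E]
    (s : E → ℝ)
    (hs_nonneg : ∀ x, 0 ≤ s x)
    (hs_add : ∀ x y, s (x + y) ≤ s x + s y)
    (hs_neg : ∀ x, s (-x) = s x)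
    (δ₀ : ℝ) (hδ₀ : 0 < δ₀ ∧ δ₀ < 1)
    (R : ℝ → ℝ) (K₆ : ℝ) (hK₆ : 0 < K₆)
    (hRlin : ∀ δ, R δ = K₆ * δ)
    (T : ℝ → E → E) (hT₀lin : IsLinearMap ℝ (T 0))
    (μ : ℝ → E)
    (hfix : ∀ δ, 0 ≤ δ → δ < δ₀ → T δ (μ δ) = μ δ)
    (ℓ : E →ₗ[ℝ] ℝ)
    (hmass : ∀ δ, 0 ≤ δ → δ < δ₀ → ℓ (μ δ) = 1)
    (C : ℝ) (hC : 0 < C)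
    (hP1 : ∀ δ, 0 < δ → δ < δ₀ → ‖T 0 (μ δ) - T δ (μ δ)‖ ≤ C * R δ)
    (M : ℝ) (hM : 0 < M)
    (hP2 : ∀ δ, 0 ≤ δ → δ < δ₀ → s (μ δ) ≤ M)
    (ρ₂ C₂ : ℝ) (hρ₂0 : 0 < ρ₂) (hρ₂1 : ρ₂ < 1) (hC₂ : 0 < C₂)
    (hP3 : ∀ n : ℕ, 1 ≤ n → ∀ ν : E, ℓ ν = 0 → ‖(T 0)^[n] ν‖ ≤ ρ₂ ^ n * C₂ * s ν)
    (M₂ : ℝ) (hM₂ : 0 < M₂)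
    (hP4 : ∀ n : ℕ, 1 ≤ n → ∀ g : E, ‖(T 0)^[n] g‖ ≤ M₂ * ‖g‖) :
    ∃ D₂ : ℝ, 0 < D₂ ∧ ∃ δ₁ : ℝ, 0 < δ₁ ∧ δ₁ < δ₀ ∧
      ∀ δ, 0 < δ → δ < δ₁ → ‖μ δ - μ 0‖ ≤ D₂ * δ * |Real.log δ| := by
  classical
  set L : E →ₗ[ℝ] E := IsLinearMap.mk' (T 0) hT₀lin with hLdef
  have hlogρ : Real.log ρ₂ < 0 := Real.log_neg hρ₂0 hρ₂1
  set Λ : ℝ := -Real.log ρ₂ with hΛdef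
  have hΛpos : 0 < Λ := by simp [hΛdef]; linarith
  have hΛinv : 0 < 1/Λ := by positivity
  have hD₂pos : 0 < 2*M*C₂ + (M₂+1)*C*K₆*(1 + 1/Λ) := by
    have h2 := mul_pos (mul_pos (mul_pos (show (0:ℝ) < M₂+1 by linarith) hC) hK₆)
      (show (0:ℝ) < 1+1/Λ by linarith)
    nlinarith [mul_pos hM hC₂]
  refine ⟨2*M*C₂ + (M₂+1)*C*K₆*(1 + 1/Λ), hD₂pos, min (δ₀/2) (Real.exp (-1)), lt_min (by linarith [hδ₀.1]) (Real.exp_pos _), ?_, ?_⟩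
  · exact lt_of_le_of_lt (min_le_left _ _) (by linarith [hδ₀.1])
  intro δ hδpos hδlt
  have hδδ₀ : δ < δ₀ := lt_trans (lt_of_lt_of_le hδlt (min_le_left _ _)) (by linarith [hδ₀.1])
  have hδe : δ < Real.exp (-1) := lt_of_lt_of_le hδlt (min_le_right _ _)
  have hlogδ : Real.log δ ≤ -1 := by
    have h := (Real.log_lt_log hδpos hδe).le
    rwa [Real.log_exp] at h
  have habs : |Real.log δ| = -Real.log δ := abs_of_neg (by linarith)
  have habs1 : 1 ≤ |Real.log δ| := by rw [habs]; linarith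
  set x : ℝ := |Real.log δ| / Λ with hxdef
  have hxpos : 0 < x := div_pos (by linarith) hΛpos
  set n : ℕ := ⌈x⌉₊ with hndef
  have hn1 : 1 ≤ n := Nat.one_le_iff_ne_zero.mpr (by
    simp only [hndef, ne_eq, Nat.ceil_eq_zero, not_le]; exact hxpos)
  have hnx : x ≤ (n:ℝ) := Nat.le_ceil x
  have hnub : (n:ℝ) ≤ x + 1 := (Nat.ceil_lt_add_one hxpos.le).le
  have hρn : ρ₂ ^ n ≤ δ := by
    rw [← Real.log_le_log_iff (by positivity) hδpos, Real.log_pow]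
    have h1 : |Real.log δ| ≤ (n:ℝ) * Λ := by
      rw [hxdef] at hnx
      calc |Real.log δ| = (|Real.log δ|/Λ) * Λ := by field_simp
        _ ≤ (n:ℝ) * Λ := by nlinarith
    rw [habs] at h1
    have : (n:ℝ) * Real.log ρ₂ = -((n:ℝ) * Λ) := by rw [hΛdef]; ring
    linarith [this, h1]
  -- fixed point facts
  have h0fix : T 0 (μ 0) = μ 0 := hfix 0 le_rfl hδ₀.1
  have hδfix : T δ (μ δ) = μ δ := hfix δ hδpos.le hδδ₀
  set e : E := μ δ - μ 0 with hedef
  set d : E := T δ (μ δ) - T 0 (μ δ) with hddef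
  have hLe : L e + d = e := by
    have hLμ0 : L (μ 0) = μ 0 := h0fix
    have : L e = T 0 (μ δ) - μ 0 := by
      rw [hedef, map_sub, hLμ0]; rfl
    rw [this, hddef, hδfix, hedef]; abel
  have key : ∀ m : ℕ, e = (L ^ m) e + ∑ k ∈ Finset.range m, (L ^ k) d := by
    intro m
    induction m with
    | zero => simp
    | succ m ih =>
      rw [Finset.sum_range_succ, pow_succ]
      have h1 : (L ^ m * L) e + (L ^ m) d = (L ^ m) e := by
        rw [Module.End.mul_apply, ← map_add, hLe]
      calc e = (L ^ m) e + ∑ k ∈ Finset.range m, (L ^ k) d := ih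
        _ = (L ^ m * L) e + (∑ k ∈ Finset.range m, (L ^ k) d + (L ^ m) d) := by
            rw [← h1]; abel
  have hℓ : ℓ e = 0 := by
    rw [hedef, map_sub, hmass δ hδpos.le hδδ₀, hmass 0 le_rfl hδ₀.1]; ring
  have hse : s e ≤ 2*M := by
    have h1 := hs_add (μ δ) (-(μ 0))
    rw [hs_neg] at h1
    have h2 := hP2 δ hδpos.le hδδ₀
    have h3 := hP2 0 le_rfl hδ₀.1
    calc s e = s (μ δ + -(μ 0)) := by rw [hedef, sub_eq_add_neg]
      _ ≤ s (μ δ) + s (μ 0) := h1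
      _ ≤ 2*M := by linarith
  have hP3' : ‖(L ^ n) e‖ ≤ ρ₂ ^ n * C₂ * (2*M) := by
    have h := hP3 n hn1 e hℓ
    have hiter : (L ^ n) e = (T 0)^[n] e := by
      rw [Module.End.pow_apply]; rfl
    rw [hiter]
    calc ‖(T 0)^[n] e‖ ≤ ρ₂ ^ n * C₂ * s e := h
      _ ≤ ρ₂ ^ n * C₂ * (2*M) := by
          have : (0:ℝ) ≤ ρ₂ ^ n * C₂ := by positivity
          nlinarith
  have hd : ‖d‖ ≤ C * (K₆ * δ) := by
    have h := hP1 δ hδpos hδδ₀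
    rw [hRlin] at h
    rw [hddef, ← norm_neg, neg_sub]
    linarith
  have hterm : ∀ k : ℕ, ‖(L ^ k) d‖ ≤ (M₂+1) * ‖d‖ := by
    intro k
    rcases Nat.eq_zero_or_pos k with hk | hk
    · subst hk; simp; linarith [mul_nonneg hM₂.le (norm_nonneg d)]
    · have h := hP4 k hk d
      have hiter : (L ^ k) d = (T 0)^[k] d := by rw [Module.End.pow_apply]; rfl
      rw [hiter]
      linarith [norm_nonneg d]
  have hsum : ‖∑ k ∈ Finset.range n, (L ^ k) d‖ ≤ (n:ℝ) * ((M₂+1) * ‖d‖) := by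
    calc ‖∑ k ∈ Finset.range n, (L ^ k) d‖ ≤ ∑ k ∈ Finset.range n, ‖(L ^ k) d‖ :=
          norm_sum_le _ _
      _ ≤ ∑ k ∈ Finset.range n, (M₂+1) * ‖d‖ := Finset.sum_le_sum (fun k _ => hterm k)
      _ = (n:ℝ) * ((M₂+1) * ‖d‖) := by
          rw [Finset.sum_const, Finset.card_range, nsmul_eq_mul]
  have hmain : ‖e‖ ≤ ρ₂ ^ n * C₂ * (2*M) + (n:ℝ) * ((M₂+1) * (C * (K₆ * δ))) := by
    calc ‖e‖ = ‖(L ^ n) e + ∑ k ∈ Finset.range n, (L ^ k) d‖ := by rw [← key n]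
      _ ≤ ‖(L ^ n) e‖ + ‖∑ k ∈ Finset.range n, (L ^ k) d‖ := norm_add_le _ _
      _ ≤ ρ₂ ^ n * C₂ * (2*M) + (n:ℝ) * ((M₂+1) * ‖d‖) := add_le_add hP3' hsum
      _ ≤ ρ₂ ^ n * C₂ * (2*M) + (n:ℝ) * ((M₂+1) * (C * (K₆ * δ))) := by
          gcongr
  show ‖e‖ ≤ (2*M*C₂ + (M₂+1)*C*K₆*(1 + 1/Λ)) * δ * |Real.log δ|
  have h1 : ρ₂ ^ n * C₂ * (2*M) ≤ δ * C₂ * (2*M) := by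
    have := mul_le_mul_of_nonneg_right hρn (show (0:ℝ) ≤ C₂ * (2*M) by positivity)
    nlinarith [this]
  have h2 : (n:ℝ) ≤ (1 + 1/Λ) * |Real.log δ| := by
    have : x + 1 ≤ (1/Λ) * |Real.log δ| + |Real.log δ| := by
      rw [hxdef]
      have : |Real.log δ| / Λ = (1/Λ) * |Real.log δ| := by ring
      rw [this]; linarith
    linarith [hnub, this]
  have h3 : (n:ℝ) * ((M₂+1) * (C * (K₆ * δ))) ≤ (M₂+1)*C*K₆*(1 + 1/Λ) * δ * |Real.log δ| := by
    have hfac : (0:ℝ) < (M₂+1) * (C * (K₆ * δ)) := by positivity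
    calc (n:ℝ) * ((M₂+1) * (C * (K₆ * δ))) ≤ ((1 + 1/Λ) * |Real.log δ|) * ((M₂+1) * (C * (K₆ * δ))) :=
            mul_le_mul_of_nonneg_right h2 hfac.le
      _ = (M₂+1)*C*K₆*(1 + 1/Λ) * δ * |Real.log δ| := by ring
  have h4 : δ * C₂ * (2*M) ≤ 2*M*C₂ * δ * |Real.log δ| := by
    have hnn : (0:ℝ) ≤ (|Real.log δ| - 1) * (δ * C₂ * (2*M)) :=
      mul_nonneg (by linarith) (by positivity)
    nlinarith [hnn]
  nlinarith [hmain, h1, h3, h4]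
end

section
/- Under the hypotheses (P1)–(P4) of the quantitative fixed-point stability lemma, for every integer N ≥ 1 and every δ ∈ (0,δ₀), ‖μ_δ − μ₀‖_w ≤ C · R(δ) · M₂ · N + 2 C₂ M ρ₂^N. -/
/-- Intermediate inequality in the proof of the quantitative fixed-point stability
lemma: under (P1)–(P4), for every `N ≥ 1` and every `δ ∈ (0, δ₀)`,
`‖μ_δ − μ₀‖_w ≤ C R(δ) M₂ N + 2 C₂ M ρ₂^N`. -/
theorem stability_intermediate_inequality
    {E : Type*} [NormedAddCommGroup E] [NormedSpace ℝ E]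
    (s : E → ℝ)
    (hs_nonneg : ∀ x, 0 ≤ s x)
    (hs_add : ∀ x y, s (x + y) ≤ s x + s y)
    (hs_neg : ∀ x, s (-x) = s x)
    (δ₀ : ℝ) (hδ₀ : 0 < δ₀ ∧ δ₀ < 1)
    (R : ℝ → ℝ) (hR_nonneg : ∀ δ, 0 < δ → δ < 1 → 0 ≤ R δ)
    (T : ℝ → E → E) (hT₀lin : IsLinearMap ℝ (T 0))
    (μ : ℝ → E)
    (hfix : ∀ δ, 0 ≤ δ → δ < δ₀ → T δ (μ δ) = μ δ)
    (ℓ : E →ₗ[ℝ] ℝ)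
    (hmass : ∀ δ, 0 ≤ δ → δ < δ₀ → ℓ (μ δ) = 1)
    (C : ℝ) (hC : 0 < C)
    (hP1 : ∀ δ, 0 < δ → δ < δ₀ → ‖T 0 (μ δ) - T δ (μ δ)‖ ≤ C * R δ)
    (M : ℝ) (hM : 0 < M)
    (hP2 : ∀ δ, 0 ≤ δ → δ < δ₀ → s (μ δ) ≤ M)
    (ρ₂ C₂ : ℝ) (hρ₂0 : 0 < ρ₂) (hρ₂1 : ρ₂ < 1) (hC₂ : 0 < C₂)
    (hP3 : ∀ n : ℕ, 1 ≤ n → ∀ ν : E, ℓ ν = 0 → ‖(T 0)^[n] ν‖ ≤ ρ₂ ^ n * C₂ * s ν)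
    (M₂ : ℝ) (hM₂ : 0 < M₂)
    (hP4 : ∀ n : ℕ, 1 ≤ n → ∀ g : E, ‖(T 0)^[n] g‖ ≤ M₂ * ‖g‖) :
    ∀ N : ℕ, 1 ≤ N → ∀ δ, 0 < δ → δ < δ₀ →
      ‖μ δ - μ 0‖ ≤ C * R δ * M₂ * (N : ℝ) + 2 * C₂ * M * ρ₂ ^ N := by
  intro N hN δ hδ hδlt
  have h01 : (0:ℝ) < δ₀ := hδ₀.1
  have hfix0 : T 0 (μ 0) = μ 0 := hfix 0 le_rfl h01
  have hmass0 : ℓ (μ 0) = 1 := hmass 0 le_rfl h01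
  have hμ0ne : μ 0 ≠ 0 := by
    intro h; rw [h, map_zero] at hmass0; norm_num at hmass0
  have hM₂1 : 1 ≤ M₂ := by
    have h := hP4 1 le_rfl (μ 0)
    simp only [Function.iterate_one, hfix0] at h
    have hpos : 0 < ‖μ 0‖ := norm_pos_iff.mpr hμ0ne
    nlinarith
  have hRδ : 0 ≤ R δ := hR_nonneg δ hδ (lt_trans hδlt hδ₀.2)
  have hCR : 0 ≤ C * R δ := mul_nonneg hC.le hRδ
  set d := μ δ - T 0 (μ δ) with hd_def
  have hd : ‖d‖ ≤ C * R δ := by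
    have h := hP1 δ hδ hδlt
    rw [hfix δ hδ.le hδlt] at h
    calc ‖d‖ = ‖T 0 (μ δ) - μ δ‖ := norm_sub_rev _ _
    _ ≤ C * R δ := h
  have hsub : ∀ n : ℕ, ∀ x y : E, (T 0)^[n] (x - y) = (T 0)^[n] x - (T 0)^[n] y := by
    intro n
    induction n with
    | zero => intro x y; simp
    | succ n ih =>
      intro x y
      rw [Function.iterate_succ_apply', Function.iterate_succ_apply',
        Function.iterate_succ_apply', ih, hT₀lin.map_sub]
  have hadd : ∀ n : ℕ, ∀ x y : E, (T 0)^[n] (x + y) = (T 0)^[n] x + (T 0)^[n] y := by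
    intro n
    induction n with
    | zero => intro x y; simp
    | succ n ih =>
      intro x y
      rw [Function.iterate_succ_apply', Function.iterate_succ_apply',
        Function.iterate_succ_apply', ih, hT₀lin.map_add]
  have hdecomp : ∀ n : ℕ,
      μ δ - μ 0 = (∑ k ∈ Finset.range n, (T 0)^[k] d) + (T 0)^[n] (μ δ - μ 0) := by
    intro n
    induction n with
    | zero => simp
    | succ n ih =>
      have h1 : μ δ - μ 0 = d + T 0 (μ δ - μ 0) := by
        rw [hT₀lin.map_sub, hfix0, hd_def]; abel
      have h2 : (T 0)^[n] (μ δ - μ 0) = (T 0)^[n] d + (T 0)^[n+1] (μ δ - μ 0) := by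
        conv_lhs => rw [h1]
        rw [hadd, Function.iterate_succ_apply]
      rw [Finset.sum_range_succ, add_assoc, ← h2]
      exact ih
  have hterm : ∀ k : ℕ, ‖(T 0)^[k] d‖ ≤ C * R δ * M₂ := by
    intro k
    cases k with
    | zero =>
      simp only [Function.iterate_zero, id_eq]
      nlinarith
    | succ k =>
      have h := hP4 (k+1) (by omega) d
      calc ‖(T 0)^[k+1] d‖ ≤ M₂ * ‖d‖ := h
      _ ≤ C * R δ * M₂ := by nlinarith
  have hsum : ‖∑ k ∈ Finset.range N, (T 0)^[k] d‖ ≤ (N : ℝ) * (C * R δ * M₂) := by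
    calc ‖∑ k ∈ Finset.range N, (T 0)^[k] d‖
        ≤ ∑ k ∈ Finset.range N, ‖(T 0)^[k] d‖ := norm_sum_le _ _
    _ ≤ ∑ _k ∈ Finset.range N, (C * R δ * M₂) := Finset.sum_le_sum (fun k _ => hterm k)
    _ = (N : ℝ) * (C * R δ * M₂) := by simp [mul_comm]
  have hℓν : ℓ (μ δ - μ 0) = 0 := by
    rw [map_sub, hmass δ hδ.le hδlt, hmass0]; ring
  have htail := hP3 N hN (μ δ - μ 0) hℓν
  have hsν : s (μ δ - μ 0) ≤ 2 * M := by
    have h1 := hs_add (μ δ) (-(μ 0))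
    rw [hs_neg] at h1
    have h2 := hP2 δ hδ.le hδlt
    have h3 := hP2 0 le_rfl h01
    rw [sub_eq_add_neg]
    linarith
  have hρN : 0 ≤ ρ₂ ^ N := pow_nonneg hρ₂0.le N
  have htail2 : ‖(T 0)^[N] (μ δ - μ 0)‖ ≤ 2 * C₂ * M * ρ₂ ^ N := by
    calc ‖(T 0)^[N] (μ δ - μ 0)‖ ≤ ρ₂ ^ N * C₂ * s (μ δ - μ 0) := htail
    _ ≤ ρ₂ ^ N * C₂ * (2 * M) := mul_le_mul_of_nonneg_left hsν (mul_nonneg hρN hC₂.le)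
    _ = 2 * C₂ * M * ρ₂ ^ N := by ring
  calc ‖μ δ - μ 0‖
      = ‖(∑ k ∈ Finset.range N, (T 0)^[k] d) + (T 0)^[N] (μ δ - μ 0)‖ := by
        rw [← hdecomp N]
  _ ≤ ‖∑ k ∈ Finset.range N, (T 0)^[k] d‖ + ‖(T 0)^[N] (μ δ - μ 0)‖ := norm_add_le _ _
  _ ≤ (N : ℝ) * (C * R δ * M₂) + 2 * C₂ * M * ρ₂ ^ N := add_le_add hsum htail2
  _ = C * R δ * M₂ * (N : ℝ) + 2 * C₂ * M * ρ₂ ^ N := by ring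
end

section
/- Let E be a pseudo-extended-metric space, let Γ : ℝ → E be any function, and let r > 0. Then ∫⁻_{γ ∈ [0,1]} ( sup { edist(Γ(x), Γ(y)) : x, y ∈ [0,1] ∩ [γ − r, γ + r] } ) dγ ≤ 2r · V, where V is the total variation of Γ on [0,1] (the supremum over finite increasing sequences x₀ ≤ x₁ ≤ ⋯ ≤ x_k in [0,1] of Σ_j edist(Γ(x_j), Γ(x_{j−1}))), the integral is the Lebesgue lower integral, and the inequality is in [0,∞]. -/
/-!
With `v t` the variation of `Γ` on `s ∩ (-∞, t]`, the oscillation of `Γ` on the window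
`[γ - r, γ + r]` is at most `v (γ + r) - v (γ - r)`. Integrating over `γ ∈ [a, b]`, the two
translates of `v` cancel except on a strip of width `2r`, where `v` is bounded by the total
variation.
-/

open MeasureTheory Set

theorem setLIntegral_comp_add_le_comp_sub_add {f : ℝ → ENNReal} {M : ENNReal}
    (hfM : ∀ t, f t ≤ M) (a b : ℝ) {r : ℝ} (hr : 0 ≤ r) :
    ∫⁻ γ in Icc a b, f (γ + r) ≤ (∫⁻ γ in Icc a b, f (γ - r)) + ENNReal.ofReal (2 * r) * M := by
  have translate : ∀ c, ∫⁻ γ in Icc a b, f (γ + c) = ∫⁻ t in Icc (a + c) (b + c), f t := by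
    intro c
    rw [(measurePreserving_add_right volume c).setLIntegral_comp_emb
      (measurableEmbedding_addRight c), image_add_const_Icc]
  have translate_sub : ∫⁻ γ in Icc a b, f (γ - r) = ∫⁻ t in Icc (a - r) (b - r), f t := by
    simpa only [sub_eq_add_neg] using translate (-r)
  have strip : ∫⁻ t in Ioc (b - r) (b + r), f t ≤ ENNReal.ofReal (2 * r) * M :=
    calc ∫⁻ t in Ioc (b - r) (b + r), f t ≤ ∫⁻ _ in Ioc (b - r) (b + r), M :=
          lintegral_mono hfM
      _ = ENNReal.ofReal (2 * r) * M := by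
          rw [setLIntegral_const, Real.volume_Ioc, mul_comm]
          ring_nf
  calc ∫⁻ γ in Icc a b, f (γ + r) = ∫⁻ t in Icc (a + r) (b + r), f t := translate r
    _ ≤ ∫⁻ t in Icc (a - r) (b - r) ∪ Ioc (b - r) (b + r), f t := by
        refine lintegral_mono_set fun t ht => ?_
        rcases le_or_gt t (b - r) with h | h
        · exact Or.inl ⟨by linarith [ht.1], h⟩
        · exact Or.inr ⟨h, ht.2⟩
    _ ≤ (∫⁻ t in Icc (a - r) (b - r), f t) + ∫⁻ t in Ioc (b - r) (b + r), f t :=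
        lintegral_union_le _ _ _
    _ ≤ (∫⁻ γ in Icc a b, f (γ - r)) + ENNReal.ofReal (2 * r) * M := by
        rw [translate_sub]
        gcongr

section Oscillation

variable {E : Type*} [PseudoEMetricSpace E] (Γ : ℝ → E)

theorem iSup_edist_le_eVariationOn (t : Set ℝ) :
    ⨆ x ∈ t, ⨆ y ∈ t, edist (Γ x) (Γ y) ≤ eVariationOn Γ t :=
  iSup₂_le fun _ hx => iSup₂_le fun _ hy => eVariationOn.edist_le Γ hx hy

theorem eVariationOn_inter_Iic_add_inter_Icc_le (s : Set ℝ) {u w : ℝ} (huw : u ≤ w) :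
    eVariationOn Γ (s ∩ Iic u) + eVariationOn Γ (s ∩ Icc u w) ≤ eVariationOn Γ (s ∩ Iic w) := by
  refine (eVariationOn.add_le_union Γ fun x hx y hy => hx.2.trans hy.2.1).trans
    (eVariationOn.mono Γ ?_)
  rintro x (⟨hxs, hxu⟩ | ⟨hxs, -, hxw⟩)
  · exact ⟨hxs, (mem_Iic.1 hxu).trans huw⟩
  · exact ⟨hxs, hxw⟩

theorem lintegral_oscillation_le_eVariationOn (s : Set ℝ) (a b : ℝ) {r : ℝ} (hr : 0 < r) :
    ∫⁻ γ in Icc a b, ⨆ x ∈ s ∩ Icc (γ - r) (γ + r), ⨆ y ∈ s ∩ Icc (γ - r) (γ + r),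
        edist (Γ x) (Γ y)
      ≤ ENNReal.ofReal (2 * r) * eVariationOn Γ s := by
  set V := eVariationOn Γ s
  rcases eq_or_ne V ⊤ with hV | hV
  · rw [hV, ENNReal.mul_top (by simpa using hr)]
    exact le_top
  set v : ℝ → ENNReal := fun t => eVariationOn Γ (s ∩ Iic t)
  have hvV : ∀ t, v t ≤ V := fun t => eVariationOn.mono Γ inter_subset_left
  have window : ∀ γ, (⨆ x ∈ s ∩ Icc (γ - r) (γ + r), ⨆ y ∈ s ∩ Icc (γ - r) (γ + r),
      edist (Γ x) (Γ y)) + v (γ - r) ≤ v (γ + r) := fun γ =>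
    calc _ ≤ eVariationOn Γ (s ∩ Icc (γ - r) (γ + r)) + v (γ - r) := by
          gcongr; exact iSup_edist_le_eVariationOn Γ _
      _ ≤ v (γ + r) := by
          rw [add_comm]
          exact eVariationOn_inter_Iic_add_inter_Icc_le Γ s (by linarith)
  have lower_ne_top : ∫⁻ γ in Icc a b, v (γ - r) ≠ ⊤ := by
    refine ne_top_of_le_ne_top ?_ (lintegral_mono fun γ => hvV (γ - r))
    rw [setLIntegral_const, Real.volume_Icc]
    exact ENNReal.mul_ne_top hV ENNReal.ofReal_ne_top
  refine ENNReal.le_of_add_le_add_right lower_ne_top ?_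
  calc _ ≤ ∫⁻ γ in Icc a b, (⨆ x ∈ s ∩ Icc (γ - r) (γ + r), ⨆ y ∈ s ∩ Icc (γ - r) (γ + r),
          edist (Γ x) (Γ y)) + v (γ - r) := le_lintegral_add _ _
    _ ≤ ∫⁻ γ in Icc a b, v (γ + r) := lintegral_mono window
    _ ≤ (∫⁻ γ in Icc a b, v (γ - r)) + ENNReal.ofReal (2 * r) * V :=
        setLIntegral_comp_add_le_comp_sub_add hvV a b hr.le
    _ = _ := add_comm _ _

end Oscillation

/-- Oscillation-integral bound: for any path `Γ : ℝ → E` into a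
pseudo-extended-metric space and any `r > 0`, the lower Lebesgue integral over
`γ ∈ [0,1]` of the oscillation of `Γ` on `[0,1] ∩ [γ − r, γ + r]` is at most
`2r` times the total variation of `Γ` on `[0,1]`. -/
theorem oscillation_integral_le_variation
    {E : Type*} [PseudoEMetricSpace E] (Γ : ℝ → E) (r : ℝ) (hr : 0 < r) :
    (∫⁻ γ in Set.Icc (0:ℝ) 1,
        ⨆ x ∈ Set.Icc (0:ℝ) 1 ∩ Set.Icc (γ - r) (γ + r),
          ⨆ y ∈ Set.Icc (0:ℝ) 1 ∩ Set.Icc (γ - r) (γ + r),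
            edist (Γ x) (Γ y))
      ≤ ENNReal.ofReal (2 * r) * eVariationOn Γ (Set.Icc (0:ℝ) 1) :=
  lintegral_oscillation_le_eVariationOn Γ _ 0 1 hr
end
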